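/- Let A : ℝ² → ℝ be defined by A(μ₁, μ₂) = max{0, max{μ₁, μ₂} − ln 2}. Then L_A(α₁, α₂) = (α₁ + α₂) ln 2 if α₁ ≥ 0, α₂ ≥ 0, and α₁ + α₂ ≤ 1, and L_A(α) = ∞ otherwise. -/
import Mathlib


/-- For `A(μ₁,μ₂) = max {0, max {μ₁, μ₂} − ln 2}`, the Legendre–Fenchel transform is
`(α₁+α₂) ln 2` if `α₁ ≥ 0`, `α₂ ≥ 0`, `α₁+α₂ ≤ 1`, and `∞` otherwise. -/
theorem legendre_fenchel_of_max_two (A : ℝ × ℝ → ℝ)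
    (hA : ∀ μ : ℝ × ℝ, A μ = max 0 (max μ.1 μ.2 - Real.log 2)) :
    ∀ α : ℝ × ℝ,
      ((0 ≤ α.1 ∧ 0 ≤ α.2 ∧ α.1 + α.2 ≤ 1) →
        (⨆ μ : ℝ × ℝ, ((α.1 * μ.1 + α.2 * μ.2 - A μ : ℝ) : EReal))
          = (((α.1 + α.2) * Real.log 2 : ℝ) : EReal)) ∧
      (¬ (0 ≤ α.1 ∧ 0 ≤ α.2 ∧ α.1 + α.2 ≤ 1) →
        (⨆ μ : ℝ × ℝ, ((α.1 * μ.1 + α.2 * μ.2 - A μ : ℝ) : EReal)) = ⊤) := by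
  have hlog : (0:ℝ) < Real.log 2 := Real.log_pos (by norm_num)
  intro α
  constructor
  · rintro ⟨h1, h2, h3⟩
    apply le_antisymm
    · apply iSup_le
      intro μ
      rw [hA, EReal.coe_le_coe_iff]
      have hm1 : μ.1 - Real.log 2 ≤ max 0 (max μ.1 μ.2 - Real.log 2) := by
        have := le_max_left μ.1 μ.2; have := le_max_right (0:ℝ) (max μ.1 μ.2 - Real.log 2)
        linarith
      have hm2 : μ.2 - Real.log 2 ≤ max 0 (max μ.1 μ.2 - Real.log 2) := by
        have := le_max_right μ.1 μ.2; have := le_max_right (0:ℝ) (max μ.1 μ.2 - Real.log 2)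
        linarith
      have hm0 : (0:ℝ) ≤ max 0 (max μ.1 μ.2 - Real.log 2) := le_max_left _ _
      nlinarith [mul_le_mul_of_nonneg_left hm1 h1, mul_le_mul_of_nonneg_left hm2 h2]
    · refine le_trans ?_ (le_iSup (fun μ : ℝ × ℝ =>
        ((α.1 * μ.1 + α.2 * μ.2 - A μ : ℝ) : EReal)) (Real.log 2, Real.log 2))
      apply le_of_eq
      rw [EReal.coe_eq_coe_iff, hA]
      simp
      ring
  · intro h
    push_neg at h
    rw [iSup_eq_top]
    intro b hb
    obtain ⟨x, hbx, -⟩ := EReal.exists_between_coe_real hb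
    rcases lt_or_ge α.1 0 with hn | h1
    · refine ⟨(-(max 0 ((x + 1) / (-α.1))), 0), lt_of_lt_of_le hbx ?_⟩
      rw [EReal.coe_le_coe_iff, hA]
      have ht : (0:ℝ) ≤ max 0 ((x + 1) / (-α.1)) := le_max_left _ _
      have hd : (x + 1) / (-α.1) ≤ max 0 ((x + 1) / (-α.1)) := le_max_right _ _
      have hA0 : max 0 (max (-(max 0 ((x + 1) / (-α.1)))) (0:ℝ) - Real.log 2) = 0 := by
        have hin : max (-(max 0 ((x + 1) / (-α.1)))) (0:ℝ) = 0 := max_eq_right (by linarith)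
        rw [hin]; exact max_eq_left (by linarith)
      simp only [hA0]
      have := (div_le_iff₀ (by linarith : (0:ℝ) < -α.1)).mp hd
      nlinarith
    · rcases lt_or_ge α.2 0 with hn | h2
      · refine ⟨(0, -(max 0 ((x + 1) / (-α.2)))), lt_of_lt_of_le hbx ?_⟩
        rw [EReal.coe_le_coe_iff, hA]
        have ht : (0:ℝ) ≤ max 0 ((x + 1) / (-α.2)) := le_max_left _ _
        have hd : (x + 1) / (-α.2) ≤ max 0 ((x + 1) / (-α.2)) := le_max_right _ _
        have hA0 : max 0 (max (0:ℝ) (-(max 0 ((x + 1) / (-α.2)))) - Real.log 2) = 0 := by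
          have hin : max (0:ℝ) (-(max 0 ((x + 1) / (-α.2)))) = 0 := max_eq_left (by linarith)
          rw [hin]; exact max_eq_left (by linarith)
        simp only [hA0]
        have := (div_le_iff₀ (by linarith : (0:ℝ) < -α.2)).mp hd
        nlinarith
      · have hs : 1 < α.1 + α.2 := h h1 h2
        set s : ℝ := α.1 + α.2 - 1 with hsdef
        have hs0 : (0:ℝ) < s := by simp [hsdef]; linarith
        set t : ℝ := max (Real.log 2) ((x + 1) / s) with htdef
        refine ⟨(t, t), lt_of_lt_of_le hbx ?_⟩
        rw [EReal.coe_le_coe_iff, hA]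
        have ht1 : Real.log 2 ≤ t := le_max_left _ _
        have ht2 : (x + 1) / s ≤ t := le_max_right _ _
        have hAt : max 0 (max t t - Real.log 2) = t - Real.log 2 := by
          rw [max_self, max_eq_right (by linarith)]
        simp only [hAt]
        have := (div_le_iff₀ hs0).mp ht2
        nlinarith
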